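/- Suppose all the columns of D have pairwise distinct heights. Then ℓ(D) consists exactly of all horizontal lines joining pairs of adjacent boxes of D (two boxes are adjacent if they lie in the same row and can be joined by a horizontal segment passing through no other box of D), and every such line is labelled 1. -/
import Mathlib


open scoped Classical

/-- height of column `j` of the diagram (columns numbered from 1). -/
def hgt (c : List ℕ) (j : ℕ) : ℕ := c.getD (j - 1) 0

/-- number of boxes in the columns strictly to the left of column `j`. -/
def off (c : List ℕ) (j : ℕ) : ℕ := (c.take (j - 1)).sum

/-- `(i, j)` (row `i`, column `j`) is a box of the diagram `D`. -/
def IsBox (c : List ℕ) (i j : ℕ) : Prop :=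
  1 ≤ j ∧ j ≤ c.length ∧ 1 ≤ i ∧ i ≤ hgt c j

/-- the entry of the box `(i, j)` in the tableau `T`. -/
def Tentry (c : List ℕ) (i j : ℕ) : ℕ := off c j + i

/-- the column of the box of `D` carrying entry `m` in `T`. -/
noncomputable def colOf (c : List ℕ) (m : ℕ) : ℕ := sInf {j | m ≤ (c.take j).sum}

/-- the row of the box of `D` carrying entry `m` in `T`. -/
noncomputable def rowOf (c : List ℕ) (m : ℕ) : ℕ := m - off c (colOf c m)

/-- the total order `≼` on entries: increasing down columns, then from right to left. -/
def ple (c : List ℕ) (a b : ℕ) : Prop :=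
  colOf c b < colOf c a ∨ (colOf c a = colOf c b ∧ a ≤ b)

/-- the strict version of `≼`. -/
def plt (c : List ℕ) (a b : ℕ) : Prop :=
  colOf c b < colOf c a ∨ (colOf c a = colOf c b ∧ a < b)

/-- column `j` has a left neighbour in `D`. -/
def HasLeftNb (c : List ℕ) (j : ℕ) : Prop :=
  ∃ i, 1 ≤ i ∧ i < j ∧ hgt c i = hgt c j ∧
    ∀ i', i < i' → i' < j → hgt c i' ≠ hgt c j

/-- the `j`-th column of the tableau `T`, rows to optional entries. -/
def Tcol (c : List ℕ) (j : ℕ) : ℕ → Option ℕ := fun i =>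
  if 1 ≤ i ∧ i ≤ hgt c j then some (Tentry c i j) else none

/-- one step of the propagation rule building `T(∞)`: the entry (if any) in row `t`
of column `j - 1` of `T(∞)` (given by `prev`) is propagated into the partially
built column `j` (given by `cur`). -/
noncomputable def propStep (c : List ℕ) (j : ℕ) (prev : ℕ → Option ℕ)
    (cur : ℕ → Option ℕ) (t : ℕ) : ℕ → Option ℕ :=
  match prev t with
  | none => cur
  | some l =>
    if hgt c j = t then
      if HasLeftNb c j ∧ cur (t + 1) = none then
        Function.update cur (t + 1) (some l)
      else cur
    else
      if cur t = none then Function.update cur t (some l) else cur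

/-- the `j`-th column of the composition tableau `T(∞)`. -/
noncomputable def TinfCol (c : List ℕ) : ℕ → ℕ → Option ℕ
  | 0 => fun _ => none
  | 1 => Tcol c 1
  | j + 2 =>
      (List.range (c.sum + 2)).foldl
        (propStep c (j + 2) (TinfCol c (j + 1))) (Tcol c (j + 2))

/-- labels of lines: `1` or `∗`. -/
inductive Lab : Type
  | one : Lab
  | star : Lab
deriving DecidableEq

/-- maximal height among the columns `1, …, j - 1`. -/
def maxHgt (c : List ℕ) (j : ℕ) : ℕ := (c.take (j - 1)).foldr max 0

/-- the maximal column height of the diagram `D`. -/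
def maxH (c : List ℕ) : ℕ := c.foldr max 0

/-- `LineB c a i j lab` : the line family `ℓ(D)` contains a line labelled `lab`
whose left end-point is the box of `D` carrying entry `a` in `T` and whose right
end-point is the box `(i, j)` (row `i` of column `C_j`). -/
def LineB (c : List ℕ) (a i j : ℕ) (lab : Lab) : Prop :=
  2 ≤ j ∧ j ≤ c.length ∧ 1 ≤ i ∧
    (match lab with
     | Lab.one =>
         (maxHgt c j < hgt c j ∧ i ≤ maxHgt c j + 1 ∧ TinfCol c (j - 1) i = some a)
       ∨ (hgt c j ≤ maxHgt c j ∧ i + 1 ≤ hgt c j ∧ TinfCol c (j - 1) i = some a)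
       ∨ (hgt c j ≤ maxHgt c j ∧ i = hgt c j ∧
           ¬(∃ j', 1 ≤ j' ∧ j' < j ∧ hgt c j' = hgt c j) ∧
           TinfCol c (j - 1) i = some a)
       ∨ (hgt c j ≤ maxHgt c j ∧ i = hgt c j ∧
           (∃ j', 1 ≤ j' ∧ j' < j ∧ hgt c j' = hgt c j) ∧
           TinfCol c (j - 1) (i + 1) = some a)
     | Lab.star =>
         hgt c j ≤ maxHgt c j ∧ i = hgt c j ∧
           (∃ j', 1 ≤ j' ∧ j' < j ∧ hgt c j' = hgt c j) ∧
           TinfCol c (j - 1) i = some a)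

/-- `LineE c a b lab` : `ℓ(D)` contains a line labelled `lab` joining the box of `D`
carrying entry `a` in `T` (on the left) to the box carrying entry `b` (on the right). -/
def LineE (c : List ℕ) (a b : ℕ) (lab : Lab) : Prop :=
  ∃ i j, LineB c a i j lab ∧ b = Tentry c i j

/-- the box `(i, j)` of `D` is right extremal relative to `ℓ(D)`. -/
def RExt (c : List ℕ) (i j : ℕ) : Prop :=
  IsBox c i j ∧ ∀ i' j', ¬ LineB c (Tentry c i j) i' j' Lab.one

/-- `c` is a composition of `n`. -/
def IsComposition (c : List ℕ) (n : ℕ) : Prop :=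
  c.sum = n ∧ ∀ x ∈ c, 0 < x

section Aux

variable {c : List ℕ}

/-- column `j'` is a genuine column (index ≥ 1) reaching row `t`. -/
def Pcol (c : List ℕ) (t j' : ℕ) : Prop := 1 ≤ j' ∧ 1 ≤ t ∧ t ≤ hgt c j'

/-- the rightmost column among `1, …, j` reaching row `t` (0 if none). -/
noncomputable def lastCol (c : List ℕ) (j t : ℕ) : ℕ := Nat.findGreatest (Pcol c t) j

/-- the expected value of `TinfCol c j t`. -/
noncomputable def expd (c : List ℕ) (j t : ℕ) : Option ℕ :=
  if lastCol c j t = 0 then none else some (Tentry c t (lastCol c j t))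

lemma getD_le_foldr_take : ∀ (l : List ℕ) (k i : ℕ), i < k →
    l.getD i 0 ≤ (l.take k).foldr max 0
  | [], k, i, _ => by simp [List.getD]
  | _ :: _, k + 1, 0, _ => by
    simp only [List.take_succ_cons, List.foldr_cons, List.getD_cons_zero]
    exact le_max_left _ _
  | a :: t, k + 1, i + 1, h => by
    simp only [List.take_succ_cons, List.foldr_cons, List.getD_cons_succ]
    exact le_trans (getD_le_foldr_take t k i (by omega)) (le_max_right _ _)

lemma getD_le_sum : ∀ (l : List ℕ) (i : ℕ), l.getD i 0 ≤ l.sum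
  | [], i => by simp [List.getD]
  | a :: t, 0 => by
    simp only [List.getD_cons_zero, List.sum_cons]
    exact Nat.le_add_right _ _
  | a :: t, i + 1 => by
    simp only [List.getD_cons_succ, List.sum_cons]
    exact le_trans (getD_le_sum t i) (Nat.le_add_left _ _)

lemma hgt_eq_zero_of_lt {j : ℕ} (h : c.length < j) : hgt c j = 0 :=
  List.getD_eq_default _ _ (by omega)

lemma hgt_le_sum (j : ℕ) : hgt c j ≤ c.sum := getD_le_sum c (j - 1)

lemma hgt_le_maxHgt {j' j : ℕ} (h1 : 1 ≤ j') (h2 : j' < j) (h3 : j' ≤ c.length) :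
    hgt c j' ≤ maxHgt c j :=
  getD_le_foldr_take c (j - 1) (j' - 1) (by omega)

lemma not_hasLeftNb (hdist : ∀ j j', 1 ≤ j → j < j' → j' ≤ c.length → hgt c j ≠ hgt c j')
    {j : ℕ} (hj : 1 ≤ hgt c j) : ¬ HasLeftNb c j := by
  rintro ⟨i, h1, h2, h3, -⟩
  have hjlen : j ≤ c.length := by
    by_contra h
    have := hgt_eq_zero_of_lt (c := c) (j := j) (by omega)
    omega
  exact hdist i j h1 h2 hjlen h3

lemma pcol_of_ne {j t : ℕ} (h : lastCol c j t ≠ 0) : Pcol c t (lastCol c j t) :=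
  Nat.findGreatest_of_ne_zero rfl h

lemma expd_some {j t : ℕ} {l : ℕ} (h : expd c j t = some l) :
    lastCol c j t ≠ 0 ∧ l = Tentry c t (lastCol c j t) := by
  unfold expd at h
  split at h
  · exact absurd h (by simp)
  · exact ⟨‹_›, (Option.some.inj h).symm⟩

lemma expd_none {j t : ℕ} (h : expd c j t = none) : lastCol c j t = 0 := by
  unfold expd at h
  split at h
  · assumption
  · exact absurd h (by simp)

lemma propStep_ne (hdist : ∀ j j', 1 ≤ j → j < j' → j' ≤ c.length → hgt c j ≠ hgt c j')
    {j m s : ℕ} (hs : s ≠ m) (cur : ℕ → Option ℕ) :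
    propStep c j (expd c (j - 1)) cur m s = cur s := by
  unfold propStep
  cases hp : expd c (j - 1) m with
  | none => rfl
  | some l =>
    obtain ⟨h0, hl⟩ := expd_some hp
    have hP := pcol_of_ne h0
    have hm1 : 1 ≤ m := hP.2.1
    show (if hgt c j = m then
        if HasLeftNb c j ∧ cur (m + 1) = none then Function.update cur (m + 1) (some l) else cur
      else if cur m = none then Function.update cur m (some l) else cur) s = cur s
    by_cases hh : hgt c j = m
    · have hnl : ¬ HasLeftNb c j := not_hasLeftNb hdist (by omega)
      rw [if_pos hh, if_neg (by rintro ⟨h, -⟩; exact hnl h)]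
    · rw [if_neg hh]
      by_cases hcm : cur m = none
      · rw [if_pos hcm, Function.update_of_ne hs]
      · rw [if_neg hcm]

lemma propStep_self (hdist : ∀ j j', 1 ≤ j → j < j' → j' ≤ c.length → hgt c j ≠ hgt c j')
    {j m : ℕ} (hj : 2 ≤ j) (cur : ℕ → Option ℕ) (hc : cur m = Tcol c j m) :
    propStep c j (expd c (j - 1)) cur m m = expd c j m := by
  obtain ⟨k, rfl⟩ : ∃ k, j = k + 1 := ⟨j - 1, by omega⟩
  have hrec : lastCol c (k + 1) m = if Pcol c m (k + 1) then k + 1 else lastCol c k m :=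
    Nat.findGreatest_succ k
  rw [show k + 1 - 1 = k from rfl]
  unfold propStep
  cases hp : expd c k m with
  | none =>
    have h0 : lastCol c k m = 0 := expd_none hp
    show cur m = expd c (k + 1) m
    rw [hc]
    by_cases hPj : Pcol c m (k + 1)
    · have hlc : lastCol c (k + 1) m = k + 1 := by rw [hrec, if_pos hPj]
      have hex : expd c (k + 1) m = some (Tentry c m (k + 1)) := by
        unfold expd
        rw [hlc, if_neg (by omega)]
      have hTc : Tcol c (k + 1) m = some (Tentry c m (k + 1)) := by
        unfold Tcol
        rw [if_pos ⟨hPj.2.1, hPj.2.2⟩]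
      rw [hTc, hex]
    · have hlc : lastCol c (k + 1) m = 0 := by rw [hrec, if_neg hPj, h0]
      have hex : expd c (k + 1) m = none := by
        unfold expd
        rw [hlc, if_pos rfl]
      have hTc : Tcol c (k + 1) m = none := by
        unfold Tcol
        rw [if_neg (by rintro ⟨ha, hb⟩; exact hPj ⟨by omega, ha, hb⟩)]
      rw [hTc, hex]
  | some l =>
    obtain ⟨h0, hl⟩ := expd_some hp
    have hP := pcol_of_ne h0
    have hm1 : 1 ≤ m := hP.2.1
    show (if hgt c (k + 1) = m then
        if HasLeftNb c (k + 1) ∧ cur (m + 1) = none then Function.update cur (m + 1) (some l)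
        else cur
      else if cur m = none then Function.update cur m (some l) else cur) m = expd c (k + 1) m
    by_cases hh : hgt c (k + 1) = m
    · have hnl : ¬ HasLeftNb c (k + 1) := not_hasLeftNb hdist (by omega)
      rw [if_pos hh, if_neg (by rintro ⟨h, -⟩; exact hnl h), hc]
      have hPj : Pcol c m (k + 1) := ⟨by omega, hm1, by omega⟩
      have hlc : lastCol c (k + 1) m = k + 1 := by rw [hrec, if_pos hPj]
      have hex : expd c (k + 1) m = some (Tentry c m (k + 1)) := by
        unfold expd
        rw [hlc, if_neg (by omega)]
      have hTc : Tcol c (k + 1) m = some (Tentry c m (k + 1)) := by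
        unfold Tcol
        rw [if_pos ⟨hm1, by omega⟩]
      rw [hTc, hex]
    · rw [if_neg hh]
      by_cases hm : m ≤ hgt c (k + 1)
      · have hPj : Pcol c m (k + 1) := ⟨by omega, hm1, hm⟩
        have hlc : lastCol c (k + 1) m = k + 1 := by rw [hrec, if_pos hPj]
        have hcm : cur m = some (Tentry c m (k + 1)) := by
          rw [hc]
          unfold Tcol
          rw [if_pos ⟨hm1, hm⟩]
        have hex : expd c (k + 1) m = some (Tentry c m (k + 1)) := by
          unfold expd
          rw [hlc, if_neg (by omega)]
        rw [if_neg (by rw [hcm]; simp), hcm, hex]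
      · have hPj : ¬ Pcol c m (k + 1) := by rintro ⟨-, -, hb⟩; exact hm hb
        have hlc : lastCol c (k + 1) m = lastCol c k m := by rw [hrec, if_neg hPj]
        have hcm : cur m = none := by
          rw [hc]
          unfold Tcol
          rw [if_neg (by rintro ⟨-, hb⟩; exact hm hb)]
        have hex : expd c (k + 1) m = some l := by
          unfold expd
          rw [hlc, if_neg h0, hl]
        rw [if_pos hcm, Function.update_self, hex]

lemma foldl_eval (hdist : ∀ j j', 1 ≤ j → j < j' → j' ≤ c.length → hgt c j ≠ hgt c j')
    {j : ℕ} (hj : 2 ≤ j) (N : ℕ) :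
    ∀ t, ((List.range N).foldl (propStep c j (expd c (j - 1))) (Tcol c j)) t =
      if t < N then expd c j t else Tcol c j t := by
  induction N with
  | zero => intro t; simp
  | succ N ih =>
    intro t
    rw [List.range_succ, List.foldl_append, List.foldl_cons, List.foldl_nil]
    by_cases ht : t = N
    · subst ht
      rw [propStep_self hdist hj _ (by rw [ih]; simp), if_pos (by omega)]
    · rw [propStep_ne hdist ht _, ih]
      by_cases h1 : t < N
      · rw [if_pos h1, if_pos (by omega)]
      · rw [if_neg h1, if_neg (by omega)]

lemma tinf_eq (hdist : ∀ j j', 1 ≤ j → j < j' → j' ≤ c.length → hgt c j ≠ hgt c j') :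
    ∀ j t, TinfCol c j t = expd c j t := by
  intro j
  induction j with
  | zero =>
    intro t
    show (none : Option ℕ) = expd c 0 t
    unfold expd lastCol
    rw [Nat.findGreatest_zero, if_pos rfl]
  | succ j ih =>
    cases j with
    | zero =>
      intro t
      show Tcol c 1 t = expd c 1 t
      have hrec : lastCol c 1 t = if Pcol c t 1 then 1 else 0 := Nat.findGreatest_succ 0
      by_cases hP : Pcol c t 1
      · have hlc : lastCol c 1 t = 1 := by rw [hrec, if_pos hP]
        have hex : expd c 1 t = some (Tentry c t 1) := by
          unfold expd
          rw [hlc, if_neg (by omega)]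
        have hTc : Tcol c 1 t = some (Tentry c t 1) := by
          unfold Tcol
          rw [if_pos ⟨hP.2.1, hP.2.2⟩]
        rw [hTc, hex]
      · have hlc : lastCol c 1 t = 0 := by rw [hrec, if_neg hP]
        have hex : expd c 1 t = none := by
          unfold expd
          rw [hlc, if_pos rfl]
        have hTc : Tcol c 1 t = none := by
          unfold Tcol
          rw [if_neg (by rintro ⟨ha, hb⟩; exact hP ⟨le_refl 1, ha, hb⟩)]
        rw [hTc, hex]
    | succ j' =>
      intro t
      have hprev : TinfCol c (j' + 1) = expd c (j' + 2 - 1) := funext ih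
      show (List.range (c.sum + 2)).foldl
          (propStep c (j' + 2) (TinfCol c (j' + 1))) (Tcol c (j' + 2)) t = expd c (j' + 2) t
      rw [hprev, foldl_eval hdist (by omega)]
      by_cases ht : t < c.sum + 2
      · rw [if_pos ht]
      · rw [if_neg ht]
        have hnP : ∀ j'', ¬ Pcol c t j'' := by
          rintro j'' ⟨-, -, hb⟩
          have := hgt_le_sum (c := c) j''
          omega
        have hlc : lastCol c (j' + 2) t = 0 :=
          Nat.findGreatest_eq_zero_iff.2 (fun m _ _ hPm => hnP m hPm)
        have hex : expd c (j' + 2) t = none := by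
          unfold expd
          rw [hlc, if_pos rfl]
        have hTc : Tcol c (j' + 2) t = none := by
          unfold Tcol
          rw [if_neg (by
            rintro ⟨ha, hb⟩
            have := hgt_le_sum (c := c) (j' + 2)
            omega)]
        rw [hTc, hex]

lemma tinf_some (hdist : ∀ j j', 1 ≤ j → j < j' → j' ≤ c.length → hgt c j ≠ hgt c j')
    {a i jm : ℕ} (hT : TinfCol c jm i = some a) :
    lastCol c jm i ≠ 0 ∧ a = Tentry c i (lastCol c jm i) ∧
      Pcol c i (lastCol c jm i) ∧ lastCol c jm i ≤ jm := by
  rw [tinf_eq hdist] at hT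
  obtain ⟨h0, hl⟩ := expd_some hT
  exact ⟨h0, hl, pcol_of_ne h0, Nat.findGreatest_le _⟩

lemma rhs_of (hdist : ∀ j j', 1 ≤ j → j < j' → j' ≤ c.length → hgt c j ≠ hgt c j')
    {a i j : ℕ} (hj2 : 2 ≤ j) (hjlen : j ≤ c.length) (hi1 : 1 ≤ i)
    (hij : i ≤ hgt c j) (hT : TinfCol c (j - 1) i = some a) :
    ∃ j0, 1 ≤ j0 ∧ j0 < j ∧ j ≤ c.length ∧ IsBox c i j0 ∧ IsBox c i j ∧
      a = Tentry c i j0 ∧ ∀ j'', j0 < j'' → j'' < j → hgt c j'' < i := by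
  obtain ⟨h0, hl, hP, hle⟩ := tinf_some hdist hT
  refine ⟨lastCol c (j - 1) i, hP.1, by omega, hjlen,
    ⟨hP.1, by omega, hi1, hP.2.2⟩, ⟨by omega, hjlen, hi1, hij⟩, hl, ?_⟩
  intro j'' h1 h2
  by_contra h
  push_neg at h
  exact Nat.findGreatest_is_greatest (P := Pcol c i) h1 (by omega) ⟨by omega, hi1, h⟩

end Aux

/-- suppose all the columns of `D` have pairwise distinct heights.
Then `ℓ(D)` consists exactly of all horizontal lines joining pairs of adjacent
boxes of `D` (boxes in a common row with no box of `D` strictly between them), and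
every such line is labelled `1`. -/
theorem statement17 (n : ℕ) (hn : 0 < n) (c : List ℕ) (hc : IsComposition c n)
    (hdist : ∀ j j', 1 ≤ j → j < j' → j' ≤ c.length → hgt c j ≠ hgt c j') :
    ∀ a i j lab, LineB c a i j lab ↔
      (lab = Lab.one ∧ ∃ j0, 1 ≤ j0 ∧ j0 < j ∧ j ≤ c.length ∧
        IsBox c i j0 ∧ IsBox c i j ∧ a = Tentry c i j0 ∧
        ∀ j'', j0 < j'' → j'' < j → hgt c j'' < i) := by
  intro a i j lab
  constructor
  · rintro ⟨hj2, hjlen, hi1, hmain⟩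
    cases lab with
    | star =>
      obtain ⟨-, -, ⟨j', hj'1, hj'2, hj'eq⟩, -⟩ := hmain
      exact absurd hj'eq (hdist j' j hj'1 hj'2 hjlen)
    | one =>
      refine ⟨rfl, ?_⟩
      rcases hmain with ⟨hmax, hi, hT⟩ | ⟨hle, hi, hT⟩ | ⟨hle, hi, -, hT⟩ |
          ⟨-, -, ⟨j', hj'1, hj'2, hj'eq⟩, -⟩
      · obtain ⟨h0, hl, hP, hlc⟩ := tinf_some hdist hT
        have hb : hgt c (lastCol c (j - 1) i) ≤ maxHgt c j :=
          hgt_le_maxHgt hP.1 (by omega) (by omega)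
        exact rhs_of hdist hj2 hjlen hi1 (by have := hP.2.2; omega) hT
      · exact rhs_of hdist hj2 hjlen hi1 (by omega) hT
      · exact rhs_of hdist hj2 hjlen hi1 (by omega) hT
      · exact absurd hj'eq (hdist j' j hj'1 hj'2 hjlen)
  · rintro ⟨rfl, j0, h1, h2, h3, ⟨hb1, hb2, hb3, hb4⟩, ⟨hc1, hc2, hc3, hc4⟩, ha, hbet⟩
    have hj2 : 2 ≤ j := by omega
    have hlc : lastCol c (j - 1) i = j0 := by
      apply le_antisymm
      · by_contra h
        push_neg at h
        have hne : lastCol c (j - 1) i ≠ 0 := by omega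
        have hP := pcol_of_ne hne
        have hle : lastCol c (j - 1) i ≤ j - 1 := Nat.findGreatest_le _
        have := hbet (lastCol c (j - 1) i) h (by omega)
        have := hP.2.2
        omega
      · exact Nat.le_findGreatest (by omega) ⟨h1, hb3, hb4⟩
    have hT : TinfCol c (j - 1) i = some a := by
      rw [tinf_eq hdist]
      unfold expd
      rw [hlc, if_neg (by omega), ha]
    refine ⟨hj2, hc2, hb3, ?_⟩
    show (maxHgt c j < hgt c j ∧ i ≤ maxHgt c j + 1 ∧ TinfCol c (j - 1) i = some a) ∨ _ ∨ _ ∨ _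
    have hmb : hgt c j0 ≤ maxHgt c j := hgt_le_maxHgt h1 h2 hb2
    by_cases hcmp : maxHgt c j < hgt c j
    · exact Or.inl ⟨hcmp, by omega, hT⟩
    · push_neg at hcmp
      rcases lt_or_eq_of_le hc4 with hlt | heq
      · exact Or.inr (Or.inl ⟨hcmp, by omega, hT⟩)
      · refine Or.inr (Or.inr (Or.inl ⟨hcmp, heq, ?_, hT⟩))
        rintro ⟨j', hj'1, hj'2, hj'eq⟩
        exact hdist j' j hj'1 hj'2 hc2 hj'eq
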